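/- Let α ∈ [0,2] and δ ≥ 2. There exists a constant C > 0 such that for all v ∈ ℝ³ and I ≥ 0, ∫_{ℝ³ × ℝ₊} e^{-|v_*|²/2 - I_*} I_*^{δ/2-1} (|v-v_*| + √I + √{I_*})^{2-α} dv_* dI_* ≤ C (1 + |v| + √I)^{2-α}. -/

import Mathlib

open MeasureTheory Real

lemma gauss_int3 : Integrable (fun vs : EuclideanSpace ℝ (Fin 3) => Real.exp (-‖vs‖ ^ 2 / 4)) := by
  have h := (GaussianFourier.integrable_cexp_neg_mul_sq_norm_add
    (V := EuclideanSpace ℝ (Fin 3)) (b := (1/4 : ℂ)) (by norm_num) 0 0).norm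
  refine h.congr (Filter.Eventually.of_forall fun x => ?_)
  simp only [Complex.norm_exp, zero_mul, add_zero]
  congr 1
  rw [show ((-(1/4 :ℂ)) * (‖x‖ : ℂ) ^ 2) = ((- ‖x‖ ^ 2 / 4 : ℝ) : ℂ) by push_cast; ring]
  exact Complex.ofReal_re _

lemma phi_int {p : ℝ} (hp : 0 ≤ p) :
    IntegrableOn (fun x : ℝ => Real.exp (-x) * x ^ p * (1 + Real.sqrt x) ^ 2) (Set.Ioi 0) := by
  have h1 := Real.GammaIntegral_convergent (s := p + 1) (by linarith)
  have h2 := Real.GammaIntegral_convergent (s := p + 3/2) (by linarith)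
  have h3 := Real.GammaIntegral_convergent (s := p + 2) (by linarith)
  have h := (h1.add (h2.const_mul 2)).add h3
  refine MeasureTheory.IntegrableOn.congr_fun h ?_ measurableSet_Ioi
  intro x hx
  simp only [Pi.add_apply]
  have hx0 : (0:ℝ) < x := hx
  have hs : Real.sqrt x = x ^ (1/2 : ℝ) := Real.sqrt_eq_rpow x
  have hhalf : x ^ (1/2:ℝ) * x ^ (1/2:ℝ) = x := by
    rw [← Real.rpow_add hx0]; norm_num
  rw [hs, show p + 1 - 1 = p by ring, show p + 3/2 - 1 = p + 1/2 by ring,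
    show p + 2 - 1 = p + 1 by ring, Real.rpow_add hx0, Real.rpow_add hx0, Real.rpow_one]
  linear_combination (-(Real.exp (-x) * x ^ p)) * hhalf

theorem collision_frequency_upper_bound (α δ : ℝ) (hα : α ∈ Set.Icc (0:ℝ) 2) (hδ : 2 ≤ δ) :
    ∃ C > 0, ∀ (v : EuclideanSpace ℝ (Fin 3)) (I : ℝ), 0 ≤ I →
      (∫ vs : EuclideanSpace ℝ (Fin 3), ∫ Is in Set.Ioi (0:ℝ),
          Real.exp (-‖vs‖ ^ 2 / 2 - Is) * Is ^ (δ / 2 - 1) *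
            (‖v - vs‖ + Real.sqrt I + Real.sqrt Is) ^ (2 - α))
        ≤ C * (1 + ‖v‖ + Real.sqrt I) ^ (2 - α) := by
  obtain ⟨hα0, hα2⟩ := hα
  set p := δ / 2 - 1 with hpdef
  have hp0 : 0 ≤ p := by rw [hpdef]; linarith
  have hφ := phi_int hp0
  set KI := ∫ x in Set.Ioi (0:ℝ), Real.exp (-x) * x ^ p * (1 + Real.sqrt x) ^ 2 with hKIdef
  have hKI : 0 ≤ KI := setIntegral_nonneg measurableSet_Ioi (fun x hx => by
    have hx0 : (0:ℝ) < x := hx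
    positivity)
  set Kv := ∫ vs : EuclideanSpace ℝ (Fin 3), Real.exp (-‖vs‖ ^ 2 / 4) with hKvdef
  have hKv : 0 ≤ Kv := integral_nonneg fun x => (Real.exp_pos _).le
  refine ⟨max 1 (8 * KI * Kv), lt_of_lt_of_le one_pos (le_max_left _ _), fun v I hI => ?_⟩
  set B := 1 + ‖v‖ + Real.sqrt I with hBdef
  have hB1 : 1 ≤ B := by
    have := norm_nonneg v; have := Real.sqrt_nonneg I; rw [hBdef]; linarith
  have hBpos : 0 < B := lt_of_lt_of_le one_pos hB1
  set A := B ^ (2 - α) with hAdef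
  have hApos : 0 < A := Real.rpow_pos_of_pos hBpos _
  -- gaussian pointwise bound
  have gbound : ∀ t : ℝ, 0 ≤ t →
      Real.exp (-t ^ 2 / 2) * (1 + t) ^ 2 ≤ 8 * Real.exp (-t ^ 2 / 4) := by
    intro t ht
    have h1 : (1 + t) ^ 2 ≤ 8 * Real.exp (t ^ 2 / 4) := by
      nlinarith [Real.add_one_le_exp (t ^ 2 / 4), sq_nonneg (t - 1), sq_nonneg t]
    calc Real.exp (-t ^ 2 / 2) * (1 + t) ^ 2
        ≤ Real.exp (-t ^ 2 / 2) * (8 * Real.exp (t ^ 2 / 4)) := by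
          exact mul_le_mul_of_nonneg_left h1 (Real.exp_pos _).le
      _ = 8 * Real.exp (-t ^ 2 / 4) := by
          rw [show Real.exp (-t ^ 2 / 2) * (8 * Real.exp (t ^ 2 / 4))
              = 8 * (Real.exp (-t ^ 2 / 2) * Real.exp (t ^ 2 / 4)) from by ring,
            ← Real.exp_add]
          congr 1; ring
  -- key pointwise bound
  have key : ∀ vs : EuclideanSpace ℝ (Fin 3), ∀ x ∈ Set.Ioi (0:ℝ),
      Real.exp (-‖vs‖ ^ 2 / 2 - x) * x ^ p *
          (‖v - vs‖ + Real.sqrt I + Real.sqrt x) ^ (2 - α)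
        ≤ A * (8 * Real.exp (-‖vs‖ ^ 2 / 4)) *
            (Real.exp (-x) * x ^ p * (1 + Real.sqrt x) ^ 2) := by
    intro vs x hx
    have hx0 : (0:ℝ) < x := hx
    have hb0 : (0:ℝ) ≤ ‖vs‖ := norm_nonneg vs
    have hc0 : (0:ℝ) ≤ Real.sqrt x := Real.sqrt_nonneg x
    have hs0 : (0:ℝ) ≤ Real.sqrt I := Real.sqrt_nonneg I
    have he : (2:ℝ) - α ≤ 2 := by linarith
    have he0 : (0:ℝ) ≤ 2 - α := by linarith
    have hX : ‖v - vs‖ + Real.sqrt I + Real.sqrt x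
        ≤ B * ((1 + ‖vs‖) * (1 + Real.sqrt x)) := by
      have h1 := norm_sub_le v vs
      have h2 := norm_nonneg v
      rw [hBdef]
      nlinarith [mul_nonneg hb0 hc0, mul_nonneg h2 hb0, mul_nonneg h2 hc0,
        mul_nonneg hs0 hb0, mul_nonneg hs0 hc0,
        mul_nonneg hs0 (mul_nonneg hb0 hc0), mul_nonneg h2 (mul_nonneg hb0 hc0)]
    have h2 : (‖v - vs‖ + Real.sqrt I + Real.sqrt x) ^ (2 - α)
        ≤ (B * ((1 + ‖vs‖) * (1 + Real.sqrt x))) ^ (2 - α) :=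
      Real.rpow_le_rpow (by positivity) hX he0
    rw [Real.mul_rpow hBpos.le (by positivity), Real.mul_rpow (by positivity) (by positivity)] at h2
    have h3 : (1 + ‖vs‖) ^ ((2:ℝ) - α) ≤ (1 + ‖vs‖) ^ 2 := by
      calc (1 + ‖vs‖) ^ ((2:ℝ) - α) ≤ (1 + ‖vs‖) ^ ((2:ℕ) : ℝ) := by
            exact Real.rpow_le_rpow_of_exponent_le (by linarith) (by push_cast; linarith)
        _ = (1 + ‖vs‖) ^ 2 := Real.rpow_natCast _ 2
    have h4 : (1 + Real.sqrt x) ^ ((2:ℝ) - α) ≤ (1 + Real.sqrt x) ^ 2 := by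
      calc (1 + Real.sqrt x) ^ ((2:ℝ) - α) ≤ (1 + Real.sqrt x) ^ ((2:ℕ) : ℝ) := by
            exact Real.rpow_le_rpow_of_exponent_le (by linarith) (by push_cast; linarith)
        _ = (1 + Real.sqrt x) ^ 2 := Real.rpow_natCast _ 2
    have h5 : (‖v - vs‖ + Real.sqrt I + Real.sqrt x) ^ (2 - α)
        ≤ A * ((1 + ‖vs‖) ^ 2 * (1 + Real.sqrt x) ^ 2) := by
      refine h2.trans ?_
      rw [hAdef]
      refine mul_le_mul_of_nonneg_left ?_ (Real.rpow_nonneg hBpos.le _)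
      exact mul_le_mul h3 h4 (Real.rpow_nonneg (by positivity) _) (by positivity)
    have hexp : Real.exp (-‖vs‖ ^ 2 / 2 - x)
        = Real.exp (-‖vs‖ ^ 2 / 2) * Real.exp (-x) := by
      rw [sub_eq_add_neg, Real.exp_add]
    calc Real.exp (-‖vs‖ ^ 2 / 2 - x) * x ^ p *
            (‖v - vs‖ + Real.sqrt I + Real.sqrt x) ^ (2 - α)
        ≤ Real.exp (-‖vs‖ ^ 2 / 2 - x) * x ^ p *
            (A * ((1 + ‖vs‖) ^ 2 * (1 + Real.sqrt x) ^ 2)) := by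
          refine mul_le_mul_of_nonneg_left h5 ?_
          have : (0:ℝ) ≤ x ^ p := Real.rpow_nonneg hx0.le _
          positivity
      _ = (Real.exp (-‖vs‖ ^ 2 / 2) * (1 + ‖vs‖) ^ 2) *
            (A * (Real.exp (-x) * x ^ p * (1 + Real.sqrt x) ^ 2)) := by
          rw [hexp]; ring
      _ ≤ (8 * Real.exp (-‖vs‖ ^ 2 / 4)) *
            (A * (Real.exp (-x) * x ^ p * (1 + Real.sqrt x) ^ 2)) := by
          refine mul_le_mul_of_nonneg_right (gbound ‖vs‖ hb0) ?_
          have : (0:ℝ) ≤ x ^ p := Real.rpow_nonneg hx0.le _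
          positivity
      _ = A * (8 * Real.exp (-‖vs‖ ^ 2 / 4)) *
            (Real.exp (-x) * x ^ p * (1 + Real.sqrt x) ^ 2) := by ring
  -- inner integral bound
  have inner_le : ∀ vs : EuclideanSpace ℝ (Fin 3),
      (∫ x in Set.Ioi (0:ℝ), Real.exp (-‖vs‖ ^ 2 / 2 - x) * x ^ p *
          (‖v - vs‖ + Real.sqrt I + Real.sqrt x) ^ (2 - α))
        ≤ (A * (8 * KI)) * Real.exp (-‖vs‖ ^ 2 / 4) := by
    intro vs
    have hmono : (∫ x in Set.Ioi (0:ℝ), Real.exp (-‖vs‖ ^ 2 / 2 - x) * x ^ p *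
          (‖v - vs‖ + Real.sqrt I + Real.sqrt x) ^ (2 - α))
        ≤ ∫ x in Set.Ioi (0:ℝ), (A * (8 * Real.exp (-‖vs‖ ^ 2 / 4))) *
            (Real.exp (-x) * x ^ p * (1 + Real.sqrt x) ^ 2) := by
      refine integral_mono_of_nonneg ?_ (hφ.const_mul _) ?_
      · rw [Filter.EventuallyLE, ae_restrict_iff' measurableSet_Ioi]
        refine Filter.Eventually.of_forall fun x hx => ?_
        have hx0 : (0:ℝ) < x := hx
        have : (0:ℝ) ≤ x ^ p := Real.rpow_nonneg hx0.le _
        positivity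
      · rw [Filter.EventuallyLE, ae_restrict_iff' measurableSet_Ioi]
        refine Filter.Eventually.of_forall fun x hx => ?_
        have := key vs x hx
        calc Real.exp (-‖vs‖ ^ 2 / 2 - x) * x ^ p *
              (‖v - vs‖ + Real.sqrt I + Real.sqrt x) ^ (2 - α)
            ≤ A * (8 * Real.exp (-‖vs‖ ^ 2 / 4)) *
                (Real.exp (-x) * x ^ p * (1 + Real.sqrt x) ^ 2) := key vs x hx
          _ = (A * (8 * Real.exp (-‖vs‖ ^ 2 / 4))) *
                (Real.exp (-x) * x ^ p * (1 + Real.sqrt x) ^ 2) := by ring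
    rw [MeasureTheory.integral_const_mul] at hmono
    refine hmono.trans (le_of_eq ?_)
    rw [← hKIdef]; ring
  -- outer integral bound
  have houter : (∫ vs : EuclideanSpace ℝ (Fin 3), ∫ x in Set.Ioi (0:ℝ),
        Real.exp (-‖vs‖ ^ 2 / 2 - x) * x ^ p *
          (‖v - vs‖ + Real.sqrt I + Real.sqrt x) ^ (2 - α))
      ≤ ∫ vs : EuclideanSpace ℝ (Fin 3),
          (A * (8 * KI)) * Real.exp (-‖vs‖ ^ 2 / 4) := by
    refine integral_mono_of_nonneg ?_ (gauss_int3.const_mul _) ?_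
    · refine Filter.Eventually.of_forall fun vs => ?_
      refine setIntegral_nonneg measurableSet_Ioi fun x hx => ?_
      have hx0 : (0:ℝ) < x := hx
      have : (0:ℝ) ≤ x ^ p := Real.rpow_nonneg hx0.le _
      positivity
    · exact Filter.Eventually.of_forall inner_le
  rw [MeasureTheory.integral_const_mul, ← hKvdef] at houter
  refine houter.trans ?_
  calc A * (8 * KI) * Kv = (8 * KI * Kv) * A := by ring
    _ ≤ max 1 (8 * KI * Kv) * A :=
        mul_le_mul_of_nonneg_right (le_max_right _ _) hApos.le
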